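/- Give S = K[x,y] the standard grading (a = b = 1, r = x/y) and let M ⊆ S be a monomial ideal of finite colength with T⁻(M) = ∅, so that its minimal generators are m_k = x^{a_k} y^k for 0 ≤ k ≤ e. Then every nonempty path P from m_k whose first arrow is (i_1, ℓ_1) satisfies l(P) ≤ i_1 ≤ k. In particular, every path P from m_k has length l(P) ≤ k, and the monomial m_k r^{l(P)} = x^{a_k + l(P)} y^{k − l(P)} has nonnegative exponents. -/

import Mathlib

/-!
Combinatorial framework for monomial ideals in `K[x,y]`, graded by
`deg x = a`, `deg y = b`.  A monomial `x^α y^β` is represented by the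
pair `(α, β) : ℤ × ℤ`; it lies in `S = K[x,y]` when both entries are
nonnegative.
-/

namespace MonId

/-- A (Laurent) monomial `x^α y^β`, represented by its exponent vector. -/
abbrev Mon : Type := ℤ × ℤ

/-- `p` is a genuine monomial of `S = K[x,y]` (nonnegative exponents). -/
def inS (p : Mon) : Prop := 0 ≤ p.1 ∧ 0 ≤ p.2

/-- `M` is (the set of monomials of) a monomial ideal of `S` of finite
colength: it consists of monomials of `S`, is closed under multiplication
by `x` and by `y`, and its complement in the monomials of `S` is finite. -/
def IsMonIdeal (M : Set Mon) : Prop :=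
  (∀ p ∈ M, inS p) ∧
  (∀ p ∈ M, (p.1 + 1, p.2) ∈ M ∧ (p.1, p.2 + 1) ∈ M) ∧
  {p : Mon | inS p ∧ p ∉ M}.Finite

/-- `p` is a minimal monomial generator of the monomial ideal `M`. -/
def IsMinGen (M : Set Mon) (p : Mon) : Prop :=
  p ∈ M ∧ (p.1 - 1, p.2) ∉ M ∧ (p.1, p.2 - 1) ∉ M

/-- `m 0, m 1, …, m e` is the list of minimal generators of `M`, in
increasing lexicographic order `≺` with `x ≺ y` (equivalently, with
strictly increasing `y`-exponents). -/
def IsGenSeq (M : Set Mon) (e : ℕ) (m : ℕ → Mon) : Prop :=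
  (∀ k ≤ e, IsMinGen M (m k)) ∧
  (∀ k, k < e → (m k).2 < (m (k + 1)).2) ∧
  (∀ p, IsMinGen M p → ∃ k ≤ e, m k = p)

/-- Multiplication of the monomial `p` by `r^ℓ`, where `r = x^b y^{-a}`. -/
def rpow (a b ℓ : ℤ) (p : Mon) : Mon := (p.1 + b * ℓ, p.2 - a * ℓ)

/-- `w m i` is `w_i = lcm(m_{i-1}, m_i)` (componentwise max of exponents). -/
def w (m : ℕ → Mon) (i : ℕ) : Mon :=
  (max (m (i - 1)).1 (m i).1, max (m (i - 1)).2 (m i).2)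

/-- The set `T⁺(M)` of positive significant arrows `(i, ℓ)`:
`1 ≤ i ≤ e`, `ℓ ≥ 1`, `m_i r^ℓ ∈ S ∖ M` and `w_i r^ℓ ∈ M`. -/
def Tplus (a b : ℤ) (M : Set Mon) (e : ℕ) (m : ℕ → Mon) : Set (ℕ × ℤ) :=
  {q | 1 ≤ q.1 ∧ q.1 ≤ e ∧ 1 ≤ q.2 ∧ inS (rpow a b q.2 (m q.1)) ∧
    rpow a b q.2 (m q.1) ∉ M ∧ rpow a b q.2 (w m q.1) ∈ M}

/-- The set `T⁻(M)` of negative significant arrows `(i, ℓ)`: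
`0 ≤ i ≤ e - 1`, `ℓ ≤ -1`, `m_i r^ℓ ∈ S ∖ M` and `w_{i+1} r^ℓ ∈ M`. -/
def Tminus (a b : ℤ) (M : Set Mon) (e : ℕ) (m : ℕ → Mon) : Set (ℕ × ℤ) :=
  {q | q.1 < e ∧ q.2 ≤ -1 ∧ inS (rpow a b q.2 (m q.1)) ∧
    rpow a b q.2 (m q.1) ∉ M ∧ rpow a b q.2 (w m (q.1 + 1)) ∈ M}

/-- `j⁺(p) = max {i : m_i divides p}`. -/
def jplus (e : ℕ) (m : ℕ → Mon) (p : Mon) : ℕ :=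
  Nat.findGreatest (fun i => (m i).1 ≤ p.1 ∧ (m i).2 ≤ p.2) e

/-- `j⁻(p) = min {i : m_i divides p}`. -/
noncomputable def jminus (e : ℕ) (m : ℕ → Mon) (p : Mon) : ℕ :=
  sInf {i | i ≤ e ∧ (m i).1 ≤ p.1 ∧ (m i).2 ≤ p.2}

/-- `IsPath a b M e m i P`: `P` is a path from the generator `m_i`, i.e. a
finite sequence of positive significant arrows whose first arrow `(i₁, ℓ₁)`
has `i₁ ≤ i`, and whose tail is a path from `m_{j⁺(w_{i₁} r^{ℓ₁})}`.
The empty sequence is a path from every generator. -/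
def IsPath (a b : ℤ) (M : Set Mon) (e : ℕ) (m : ℕ → Mon) : ℕ → List (ℕ × ℤ) → Prop
  | _, [] => True
  | i, q :: rest => q ∈ Tplus a b M e m ∧ q.1 ≤ i ∧
      IsPath a b M e m (jplus e m (rpow a b q.2 (w m q.1))) rest

/-- The length `l(P) = ℓ₁ + ⋯ + ℓ_s` of a path. -/
def llen (P : List (ℕ × ℤ)) : ℤ := (P.map Prod.snd).sum

/-- `lm j` is the largest `ℓ` with `(j, ℓ) ∈ T⁺(M)`, and is `0` when no
such arrow exists. -/
def IsLmax (Tp : Set (ℕ × ℤ)) (lm : ℕ → ℤ) : Prop :=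
  ∀ j : ℕ, (∀ ℓ : ℤ, (j, ℓ) ∈ Tp → ℓ ≤ lm j) ∧
    ((∃ ℓ : ℤ, (j, ℓ) ∈ Tp) → (j, lm j) ∈ Tp) ∧
    ((¬ ∃ ℓ : ℤ, (j, ℓ) ∈ Tp) → lm j = 0)

/-- `IsZSeq a b e m lm k L`: `L` is the sequence `(z_1, z_2, …)` of arrows
produced by the greedy procedure started at index `k`: while `i ≥ 1`, if
`ℓ_i > 0` record the arrow `(i, ℓ_i)` and jump to `j⁺(w_i r^{ℓ_i})`,
otherwise decrease `i` by one; stop when `i ≤ 0`. -/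
inductive IsZSeq (a b : ℤ) (e : ℕ) (m : ℕ → Mon) (lm : ℕ → ℤ) : ℕ → List (ℕ × ℤ) → Prop where
  | zero : IsZSeq a b e m lm 0 []
  | skip {i : ℕ} {L : List (ℕ × ℤ)} : 1 ≤ i → lm i ≤ 0 →
      IsZSeq a b e m lm (i - 1) L → IsZSeq a b e m lm i L
  | step {i : ℕ} {L : List (ℕ × ℤ)} : 1 ≤ i → 0 < lm i →
      IsZSeq a b e m lm (jplus e m (rpow a b (lm i) (w m i))) L →
      IsZSeq a b e m lm i ((i, lm i) :: L)

/-- `D` is a direct path from `m_k`: a path which is either a nonempty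
initial segment `(z_1, …, z_s)` of the greedy sequence from `k`, or
`(z_1, …, z_s, (i', ℓ'))` where `i'` is the index of `z_{s+1}` and
`1 ≤ ℓ' < ℓ_{i'}`. -/
def IsDirectPath (a b : ℤ) (M : Set Mon) (e : ℕ) (m : ℕ → Mon) (lm : ℕ → ℤ)
    (k : ℕ) (D : List (ℕ × ℤ)) : Prop :=
  IsPath a b M e m k D ∧
  ∃ L, IsZSeq a b e m lm k L ∧
    ((∃ s : ℕ, 0 < s ∧ s ≤ L.length ∧ D = L.take s) ∨
     (∃ (s : ℕ) (z : ℕ × ℤ) (ℓ' : ℤ), L[s]? = some z ∧ 1 ≤ ℓ' ∧ ℓ' < z.2 ∧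
       D = L.take s ++ [(z.1, ℓ')]))

/-- The monomial `c_P = c_{i₁}^{ℓ₁} ⋯ c_{i_s}^{ℓ_s}` associated to a path,
as an element of the polynomial ring with variables `c_i^ℓ` (indexed by
pairs `(i, ℓ)`). -/
noncomputable def cP (K : Type*) [CommSemiring K] (P : List (ℕ × ℤ)) : MvPolynomial (ℕ × ℤ) K :=
  (P.map MvPolynomial.X).prod

end MonId

open MonId

/-!
Since `T⁻(M) = ∅`, consecutive generators differ by exactly one power of `y` (a jump of two or
more would produce the negative arrow `(n, -1)`), so `m_k = x^{a_k} y^k`. Hence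
`w_i = x^{a_{i-1}} y^i`, and an arrow `(i, ℓ)` lands on `w_i r^ℓ`, whose `y`-exponent `i - ℓ`
bounds the index `j⁺(w_i r^ℓ)` at which the rest of the path starts. Inductively, that rest has
length at most `i - ℓ`, so the whole path has length at most `i ≤ k`.
-/

namespace MonId

variable {M : Set Mon} {e : ℕ} {m : ℕ → Mon}

namespace IsMonIdeal

theorem mem_of_le (hM : IsMonIdeal M) {p q : Mon} (hp : p ∈ M) (hpq : p ≤ q) : q ∈ M := by
  have hx : ∀ a, p.1 ≤ a → (a, p.2) ∈ M :=
    Int.leInduction hp fun _ _ h => (hM.2.1 _ h).1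
  have hy : ∀ b, p.2 ≤ b → (q.1, b) ∈ M :=
    Int.leInduction (hx q.1 hpq.1) fun _ _ h => (hM.2.1 _ h).2
  exact hy q.2 hpq.2

theorem exists_isMinGen_le (hM : IsMonIdeal M) {p : Mon} (hp : p ∈ M) :
    ∃ q, IsMinGen M q ∧ q ≤ p := by
  induction hn : (p.1 + p.2).toNat using Nat.strong_induction_on generalizing p with
  | _ n ih =>
  have hpS := hM.1 p hp
  by_cases hx : (p.1 - 1, p.2) ∈ M
  · have hxS := hM.1 _ hx
    obtain ⟨q, hq, hqp⟩ := ih _ (by simp only [inS] at hpS hxS; omega) hx rfl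
    exact ⟨q, hq, hqp.trans (Prod.mk_le_mk.2 ⟨by omega, le_rfl⟩)⟩
  by_cases hy : (p.1, p.2 - 1) ∈ M
  · have hyS := hM.1 _ hy
    obtain ⟨q, hq, hqp⟩ := ih _ (by simp only [inS] at hpS hyS; omega) hy rfl
    exact ⟨q, hq, hqp.trans (Prod.mk_le_mk.2 ⟨le_rfl, by omega⟩)⟩
  exact ⟨p, ⟨hp, hx, hy⟩, le_rfl⟩

theorem exists_mem_snd_eq_zero (hM : IsMonIdeal M) : ∃ a : ℤ, (a, 0) ∈ M := by
  by_contra! h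
  refine Set.infinite_of_injective_forall_mem (f := fun n : ℕ => ((n : ℤ), (0 : ℤ)))
    (fun _ _ hab => by simpa using hab) (fun n => ?_) hM.2.2
  exact ⟨⟨n.cast_nonneg, le_rfl⟩, h n⟩

end IsMonIdeal

namespace IsGenSeq

theorem snd_strictMonoOn (hg : IsGenSeq M e m) : StrictMonoOn (fun k => (m k).2) (Set.Iic e) :=
  strictMonoOn_Iic_of_lt_succ fun k hk => by simpa using hg.2.1 k hk

theorem fst_lt_fst_succ (hM : IsMonIdeal M) (hg : IsGenSeq M e m) {i : ℕ} (hi : i < e) :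
    (m (i + 1)).1 < (m i).1 := by
  by_contra! h
  exact (hg.1 (i + 1) hi).2.2 <|
    hM.mem_of_le (hg.1 i hi.le).1 (Prod.mk_le_mk.2 ⟨h, by linarith [hg.2.1 i hi]⟩)

theorem fst_strictAntiOn (hM : IsMonIdeal M) (hg : IsGenSeq M e m) :
    StrictAntiOn (fun k => (m k).1) (Set.Iic e) :=
  strictAntiOn_Iic_of_succ_lt fun k hk => by simpa using hg.fst_lt_fst_succ hM hk

theorem exists_le_of_mem (hM : IsMonIdeal M) (hg : IsGenSeq M e m) {p : Mon} (hp : p ∈ M) :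
    ∃ j ≤ e, m j ≤ p := by
  obtain ⟨q, hq, hqp⟩ := hM.exists_isMinGen_le hp
  obtain ⟨j, hj, rfl⟩ := hg.2.2 q hq
  exact ⟨j, hj, hqp⟩

theorem snd_zero (hM : IsMonIdeal M) (hg : IsGenSeq M e m) : (m 0).2 = 0 := by
  obtain ⟨a, ha⟩ := hM.exists_mem_snd_eq_zero
  obtain ⟨j, hj, hja⟩ := hg.exists_le_of_mem hM ha
  have hmono : (m 0).2 ≤ (m j).2 :=
    hg.snd_strictMonoOn.monotoneOn (Set.mem_Iic.2 e.zero_le) hj j.zero_le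
  exact le_antisymm (hmono.trans hja.2) (hM.1 _ (hg.1 0 e.zero_le).1).2

theorem mem_Tminus_of_snd_gap (hM : IsMonIdeal M) (hg : IsGenSeq M e m) {n : ℕ} (hn : n < e)
    (hgap : (m n).2 + 2 ≤ (m (n + 1)).2) : (n, -1) ∈ Tminus 1 1 M e m := by
  have hS := hM.1 _ (hg.1 (n + 1) hn).1
  have hx := hg.fst_lt_fst_succ hM hn
  refine ⟨hn, le_rfl, ?_, fun hmem => ?_, ?_⟩
  · simp only [inS, rpow] at hS ⊢
    have := (hM.1 _ (hg.1 n hn.le).1).2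
    omega
  · obtain ⟨j, hj, hj1, hj2⟩ := hg.exists_le_of_mem hM hmem
    simp only [rpow] at hj1 hj2
    rcases le_or_gt j n with hjn | hnj
    · have := (hg.fst_strictAntiOn hM).antitoneOn (Set.mem_Iic.2 (hjn.trans hn.le))
        (Set.mem_Iic.2 hn.le) hjn
      omega
    · have : (m (n + 1)).2 ≤ (m j).2 := hg.snd_strictMonoOn.monotoneOn (Set.mem_Iic.2 hn) hj hnj
      omega
  · refine hM.mem_of_le (hg.1 (n + 1) hn).1 ?_
    simp only [Prod.le_def, w, rpow, Nat.add_sub_cancel]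
    omega

theorem snd_eq_of_Tminus_eq_empty (hM : IsMonIdeal M) (hg : IsGenSeq M e m)
    (hTm : Tminus 1 1 M e m = ∅) {k : ℕ} (hk : k ≤ e) : (m k).2 = k := by
  induction k with
  | zero => exact hg.snd_zero hM
  | succ n ih =>
    have hn := ih (by omega)
    have hlt := hg.2.1 n (by omega)
    by_contra hne
    exact hTm.subset (hg.mem_Tminus_of_snd_gap hM (n := n) (by omega) (by push_cast at hne; omega))

end IsGenSeq

theorem llen_cons (q : ℕ × ℤ) (P : List (ℕ × ℤ)) : llen (q :: P) = q.2 + llen P := by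
  simp [llen]

theorem llen_nonneg_of_isPath {a b : ℤ} :
    ∀ {k : ℕ} {P : List (ℕ × ℤ)}, IsPath a b M e m k P → 0 ≤ llen P
  | _, [], _ => le_rfl
  | _, q :: _, ⟨hq, _, hrest⟩ => by
    rw [llen_cons]
    linarith [hq.2.2.1, llen_nonneg_of_isPath hrest]

theorem jplus_le_snd (hy : ∀ k ≤ e, (m k).2 = k) {p : Mon} (hp : 0 ≤ p.2) :
    (jplus e m p : ℤ) ≤ p.2 := by
  by_cases h0 : jplus e m p = 0
  · rw [h0]
    exact_mod_cast hp
  · have hdvd := Nat.findGreatest_of_ne_zero rfl h0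
    calc (jplus e m p : ℤ) = (m (jplus e m p)).2 := (hy _ (Nat.findGreatest_le e)).symm
      _ ≤ p.2 := hdvd.2

theorem w_snd (hy : ∀ k ≤ e, (m k).2 = k) {i : ℕ} (hi : 1 ≤ i) (hie : i ≤ e) :
    (w m i).2 = i := by
  simp only [w, hy i hie, hy (i - 1) (by omega)]
  omega

theorem jplus_add_le_of_mem_Tplus (hM : IsMonIdeal M) (hy : ∀ k ≤ e, (m k).2 = k)
    {q : ℕ × ℤ} (hq : q ∈ Tplus 1 1 M e m) :
    (jplus e m (rpow 1 1 q.2 (w m q.1)) : ℤ) + q.2 ≤ q.1 := by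
  obtain ⟨hi, hie, -, -, -, hwM⟩ := hq
  have hj := jplus_le_snd hy (hM.1 _ hwM).2
  have hsnd : (rpow 1 1 q.2 (w m q.1)).2 = q.1 - q.2 := by
    rw [rpow, w_snd hy hi hie]
    ring
  omega

theorem llen_cons_le_of_mem_Tplus (hM : IsMonIdeal M) (hy : ∀ k ≤ e, (m k).2 = k)
    {q : ℕ × ℤ} {P : List (ℕ × ℤ)} (hq : q ∈ Tplus 1 1 M e m)
    (hP : llen P ≤ jplus e m (rpow 1 1 q.2 (w m q.1))) : llen (q :: P) ≤ q.1 := by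
  rw [llen_cons]
  linarith [jplus_add_le_of_mem_Tplus hM hy hq]

theorem llen_le_of_isPath (hM : IsMonIdeal M) (hy : ∀ k ≤ e, (m k).2 = k) :
    ∀ {k : ℕ} {P : List (ℕ × ℤ)}, IsPath 1 1 M e m k P → llen P ≤ k
  | _, [], _ => by simp [llen]
  | _, q :: _, ⟨hq, hqk, hrest⟩ =>
    (llen_cons_le_of_mem_Tplus hM hy hq (llen_le_of_isPath hM hy hrest)).trans (mod_cast hqk)

end MonId

/-- In the standard grading (`a = b = 1`, `r = x/y`),
let `M` be a monomial ideal of finite colength with `T⁻(M) = ∅` (so its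
minimal generators are `m_k = x^{a_k} y^k`).  Every nonempty path `P`
from `m_k` with first arrow `(i₁, ℓ₁)` has `l(P) ≤ i₁ ≤ k`; in
particular every path `P` from `m_k` has `l(P) ≤ k`, and the monomial
`m_k r^{l(P)}` has nonnegative exponents. -/
theorem path_length_le
    (M : Set Mon) (hM : IsMonIdeal M) (e : ℕ) (m : ℕ → Mon)
    (hg : IsGenSeq M e m) (hTm : Tminus 1 1 M e m = ∅)
    (k : ℕ) (hk : k ≤ e)
    (P : List (ℕ × ℤ)) (hP : IsPath 1 1 M e m k P) :
    (∀ (q : ℕ × ℤ) (rest : List (ℕ × ℤ)), P = q :: rest →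
      llen P ≤ (q.1 : ℤ) ∧ q.1 ≤ k) ∧
    llen P ≤ (k : ℤ) ∧
    inS (rpow 1 1 (llen P) (m k)) := by
  have hy : ∀ j ≤ e, (m j).2 = j := fun _ => hg.snd_eq_of_Tminus_eq_empty hM hTm
  refine ⟨?_, llen_le_of_isPath hM hy hP, ?_⟩
  · rintro q rest rfl
    obtain ⟨hq, hqk, hrest⟩ := hP
    exact ⟨llen_cons_le_of_mem_Tplus hM hy hq (llen_le_of_isPath hM hy hrest), hqk⟩
  · have hlen := llen_le_of_isPath hM hy hP
    have hlen0 := llen_nonneg_of_isPath hP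
    have hmk := (hM.1 _ (hg.1 k hk).1).1
    simp only [inS, rpow, hy k hk]
    omega
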